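/- For every integer i ≥ 1, lim_{L→∞} liminf_{n→∞} Σ_{j=L+1}^n a(n,j)·p(j,i) = 0. -/

import Mathlib

open Real Filter Topology MeasureTheory

/-- The harmonic number `h n = ∑_{i=1}^n 1/i`, with `h 0 = 0`. -/
noncomputable def harmonic' (n : ℕ) : ℝ := ∑ i ∈ Finset.Icc 1 n, (1 : ℝ) / i

/-- One-step transition probabilities of the harmonic descent chain,
`p j i = 1/((j-i)·h_{j-1})` for `1 ≤ i < j`. -/
noncomputable def hdP (j i : ℕ) : ℝ := 1 / (((j : ℝ) - (i : ℝ)) * harmonic' (j - 1))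

/-- `b 1 = 1` and `b i = 6 h_{i-1} / (π² (i-1))` for `i ≥ 2`. -/
noncomputable def hdB (i : ℕ) : ℝ :=
  if i = 1 then 1 else 6 * harmonic' (i - 1) / (Real.pi ^ 2 * ((i : ℝ) - 1))

/-!
Let `T_L(n) = ∑_{L < j ≤ n} a(n,j) p(j,i)` be the mass that jumps from above `L` straight to `i`.
Started at `n > L`, the chain crosses from `(L, n]` into `[1, L]` exactly once, so
`∑_{L < j ≤ n} a(n,j) ∑_{i' ≤ L} p(j,i') = 1`. Since `p(j, ·)` is increasing below `j`, each of
the `L - i` targets `i' ∈ (i, L]` receives at least `p(j,i)`, whence `0 ≤ T_L(n) ≤ 1/(L - i)`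
uniformly in `n`, and the liminf is squeezed to `0`.
-/

open Finset

section DescentChain

variable {p a : ℕ → ℕ → ℝ}

theorem occupation_nonneg (hp : ∀ j i, i < j → 0 ≤ p j i) (ha_diag : ∀ n, 1 ≤ n → a n n = 1)
    (ha_rec : ∀ n i, 1 ≤ i → i < n → a n i = ∑ j ∈ Ioc i n, a n j * p j i)
    {n j : ℕ} (hj : 1 ≤ j) (hjn : j ≤ n) : 0 ≤ a n j := by
  induction hd : n - j using Nat.strong_induction_on generalizing j with
  | _ d ih =>
    rcases hjn.eq_or_lt with rfl | hlt
    · rw [ha_diag j hj]; exact zero_le_one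
    · rw [ha_rec n j hj hlt]
      refine sum_nonneg fun k hk => ?_
      obtain ⟨hjk, hkn⟩ := mem_Ioc.mp hk
      exact mul_nonneg (ih (n - k) (by omega) (by omega) hkn rfl) (hp k j hjk)

theorem sum_occupation_mul_sum_Icc_eq_one (hp_sum : ∀ L, 1 ≤ L → ∑ i ∈ Icc 1 L, p (L + 1) i = 1)
    (ha_diag : ∀ n, 1 ≤ n → a n n = 1)
    (ha_rec : ∀ n i, 1 ≤ i → i < n → a n i = ∑ j ∈ Ioc i n, a n j * p j i)
    {n L : ℕ} (hL : 1 ≤ L) (hLn : L < n) :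
    ∑ j ∈ Ioc L n, a n j * ∑ i ∈ Icc 1 L, p j i = 1 := by
  obtain ⟨m, rfl⟩ : ∃ m, n = m + 1 := ⟨n - 1, by omega⟩
  replace hLn : L ≤ m := Nat.le_of_lt_succ hLn
  induction hLn using Nat.decreasingInduction with
  | self =>
    rw [Nat.Ioc_succ_singleton, sum_singleton, ha_diag _ (by omega), one_mul, hp_sum m hL]
  | of_succ L hLm ih =>
    have hcross := ih (by omega)
    rw [← sum_Ioc_consecutive _ L.le_succ (Nat.succ_le_succ hLm.le), Nat.Ioc_succ_singleton,
      sum_singleton, hp_sum L hL, mul_one, ha_rec _ (L + 1) (by omega) (by omega)]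
    simp only [sum_Icc_succ_top (Nat.le_add_left 1 L), mul_add, sum_add_distrib] at hcross
    linarith

theorem sub_smul_le_sum_Icc (hp : ∀ j i, i < j → 0 ≤ p j i)
    (hp_mono : ∀ j, MonotoneOn (p j) (Set.Iio j)) {i j L : ℕ} (hLj : L < j) :
    (L - i) • p j i ≤ ∑ i' ∈ Icc 1 L, p j i' := by
  calc (L - i) • p j i = #(Ioc i L) • p j i := by rw [Nat.card_Ioc]
    _ ≤ ∑ i' ∈ Ioc i L, p j i' := by
      refine card_nsmul_le_sum _ _ _ fun i' hi' => ?_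
      obtain ⟨hii', hi'L⟩ := mem_Ioc.mp hi'
      exact hp_mono j (Set.mem_Iio.mpr (by omega)) (Set.mem_Iio.mpr (by omega)) hii'.le
    _ ≤ ∑ i' ∈ Icc 1 L, p j i' := by
      refine sum_le_sum_of_subset_of_nonneg (fun i' hi' => ?_) fun i' hi' _ => ?_
      · simp only [mem_Ioc, mem_Icc] at hi' ⊢; omega
      · exact hp j i' (by simp only [mem_Icc] at hi'; omega)

theorem sum_Ioc_occupation_mul_le (hp : ∀ j i, i < j → 0 ≤ p j i)
    (hp_mono : ∀ j, MonotoneOn (p j) (Set.Iio j))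
    (hp_sum : ∀ L, 1 ≤ L → ∑ i ∈ Icc 1 L, p (L + 1) i = 1)
    (ha_diag : ∀ n, 1 ≤ n → a n n = 1)
    (ha_rec : ∀ n i, 1 ≤ i → i < n → a n i = ∑ j ∈ Ioc i n, a n j * p j i)
    {i L : ℕ} (hiL : i < L) (n : ℕ) :
    ∑ j ∈ Ioc L n, a n j * p j i ≤ 1 / (L - i : ℕ) := by
  have hLi : (0 : ℝ) < (L - i : ℕ) := by exact_mod_cast Nat.sub_pos_of_lt hiL
  rcases le_or_gt n L with hnL | hLn
  · rw [Ioc_eq_empty_of_le hnL, sum_empty]; positivity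
  rw [le_div_iff₀ hLi, sum_mul]
  calc ∑ j ∈ Ioc L n, a n j * p j i * (L - i : ℕ)
      ≤ ∑ j ∈ Ioc L n, a n j * ∑ i' ∈ Icc 1 L, p j i' := by
        refine sum_le_sum fun j hj => ?_
        obtain ⟨hLj, hjn⟩ := mem_Ioc.mp hj
        rw [mul_assoc, mul_comm (p j i), ← nsmul_eq_mul]
        exact mul_le_mul_of_nonneg_left (sub_smul_le_sum_Icc hp hp_mono hLj)
          (occupation_nonneg hp ha_diag ha_rec (by omega) hjn)
    _ = 1 := sum_occupation_mul_sum_Icc_eq_one hp_sum ha_diag ha_rec (by omega) hLn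

theorem sum_Ioc_occupation_mul_nonneg (hp : ∀ j i, i < j → 0 ≤ p j i)
    (ha_diag : ∀ n, 1 ≤ n → a n n = 1)
    (ha_rec : ∀ n i, 1 ≤ i → i < n → a n i = ∑ j ∈ Ioc i n, a n j * p j i)
    {i L : ℕ} (hiL : i ≤ L) (n : ℕ) : 0 ≤ ∑ j ∈ Ioc L n, a n j * p j i := by
  refine sum_nonneg fun j hj => ?_
  obtain ⟨hLj, hjn⟩ := mem_Ioc.mp hj
  exact mul_nonneg (occupation_nonneg hp ha_diag ha_rec (by omega) hjn) (hp j i (by omega))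

end DescentChain

theorem harmonic'_nonneg (n : ℕ) : 0 ≤ harmonic' n :=
  sum_nonneg fun _ _ => by positivity

theorem harmonic'_pos {n : ℕ} (hn : 1 ≤ n) : 0 < harmonic' n :=
  sum_pos (fun k hk => by have : 1 ≤ k := (mem_Icc.mp hk).1; positivity) ⟨1, by simp [hn]⟩

theorem hdP_nonneg {j i : ℕ} (hij : i < j) : 0 ≤ hdP j i := by
  have : (0 : ℝ) ≤ j - i := by
    rw [sub_nonneg]; exact_mod_cast hij.le
  have := harmonic'_nonneg (j - 1)
  unfold hdP; positivity

theorem hdP_monotoneOn (j : ℕ) : MonotoneOn (hdP j) (Set.Iio j) := by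
  intro i _ i' hi' hii'
  have hj : (0 : ℝ) < j - i' := by rw [sub_pos]; exact_mod_cast hi'
  have hi : (j : ℝ) - i' ≤ j - i := by gcongr
  rcases (harmonic'_nonneg (j - 1)).eq_or_lt with hh | hh
  · simp [hdP, ← hh]
  · unfold hdP; gcongr

theorem sum_Icc_hdP (L : ℕ) (hL : 1 ≤ L) : ∑ i ∈ Icc 1 L, hdP (L + 1) i = 1 := by
  have hh := harmonic'_pos hL
  calc ∑ i ∈ Icc 1 L, hdP (L + 1) i = ∑ k ∈ Icc 1 L, 1 / (k : ℝ) / harmonic' L := by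
        refine sum_nbij' (fun i => L + 1 - i) (fun k => L + 1 - k) ?_ ?_ ?_ ?_ ?_ <;>
          intro i hi <;> simp only [mem_Icc] at hi ⊢
        · omega
        · omega
        · omega
        · omega
        · rw [hdP, Nat.cast_sub (by omega), Nat.add_sub_cancel, div_div]
    _ = 1 := by rw [← sum_div]; exact div_self hh.ne'

theorem liminf_mem_Icc_of_forall_mem_Icc {ι : Type*} {l : Filter ι} [l.NeBot] {f : ι → ℝ}
    {lo hi : ℝ} (hf : ∀ x, f x ∈ Set.Icc lo hi) : liminf f l ∈ Set.Icc lo hi := by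
  have hbdd : IsBoundedUnder (· ≥ ·) l f := isBoundedUnder_of ⟨lo, fun x => (hf x).1⟩
  have hcobdd : IsCoboundedUnder (· ≥ ·) l f :=
    (isBoundedUnder_of ⟨hi, fun x => (hf x).2⟩).isCoboundedUnder_ge
  exact ⟨le_liminf_of_le hcobdd (.of_forall fun x => (hf x).1),
    liminf_le_of_frequently_le (.of_forall fun x => (hf x).2) hbdd⟩

theorem hd_tail_sum_liminf_tendsto_zero_general
    (a : ℕ → ℕ → ℝ)
    (ha_diag : ∀ n : ℕ, 1 ≤ n → a n n = 1)
    (ha_rec : ∀ n i : ℕ, 1 ≤ i → i < n →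
      a n i = ∑ j ∈ Finset.Ioc i n, a n j * hdP j i)
    (i : ℕ) :
    Filter.Tendsto
      (fun L : ℕ =>
        Filter.liminf (fun n : ℕ => ∑ j ∈ Finset.Ioc L n, a n j * hdP j i)
          Filter.atTop)
      Filter.atTop (𝓝 0) := by
  have hp : ∀ j i, i < j → 0 ≤ hdP j i := fun _ _ => hdP_nonneg
  have hbound : ∀ᶠ L in atTop, liminf (fun n => ∑ j ∈ Ioc L n, a n j * hdP j i) atTop ∈
      Set.Icc 0 (1 / ((L - i : ℕ) : ℝ)) := by
    filter_upwards [eventually_gt_atTop i] with L hiL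
    exact liminf_mem_Icc_of_forall_mem_Icc fun n =>
      ⟨sum_Ioc_occupation_mul_nonneg hp ha_diag ha_rec hiL.le n,
        sum_Ioc_occupation_mul_le hp hdP_monotoneOn sum_Icc_hdP ha_diag ha_rec hiL n⟩
  have hlim : Tendsto (fun L : ℕ => 1 / ((L - i : ℕ) : ℝ)) atTop (𝓝 0) :=
    tendsto_one_div_atTop_nhds_zero_nat.comp (tendsto_sub_atTop_nat i)
  exact tendsto_of_tendsto_of_tendsto_of_le_of_le' tendsto_const_nhds hlim
    (hbound.mono fun _ h => h.1) (hbound.mono fun _ h => h.2)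

theorem hd_tail_sum_liminf_tendsto_zero
    (a : ℕ → ℕ → ℝ)
    (ha_diag : ∀ n : ℕ, 1 ≤ n → a n n = 1)
    (ha_rec : ∀ n i : ℕ, 1 ≤ i → i < n →
      a n i = ∑ j ∈ Finset.Ioc i n, a n j * hdP j i)
    (i : ℕ) (hi : 1 ≤ i) :
    Filter.Tendsto
      (fun L : ℕ =>
        Filter.liminf (fun n : ℕ => ∑ j ∈ Finset.Ioc L n, a n j * hdP j i)
          Filter.atTop)
      Filter.atTop (𝓝 0) :=
  hd_tail_sum_liminf_tendsto_zero_general a ha_diag ha_rec i
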